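/- arXiv:2310.00316 — 3 statements merged into one kernel-verified Lean document; each statement's English description precedes it below -/
import Mathlib

section
/- Let C be a pointed category with torsion theories (T₁, F₁) and (T₂, F₂) such that T₂ ⊆ T₁, and let Z := T₁ ∩ F₂. Then T₁ = T₂ ∗ Z and F₂ = Z ∗ F₁, where A ∗ B denotes the class of objects X admitting a short exact sequence 0 → A → X → B → 0 with A ∈ A and B ∈ B. -/
open CategoryTheory CategoryTheory.Limits

universe v u

variable {C : Type u} [Category.{v} C]

/-- A morphism is `Z`-trivial if it factors through an object of `Z`. -/
def IsTrivialMor (Z : Set C) {X Y : C} (f : X ⟶ Y) : Prop :=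
  ∃ (W : C) (p : X ⟶ W) (q : W ⟶ Y), W ∈ Z ∧ p ≫ q = f

/-- `ε` is a `Z`-kernel of `f`. -/
def IsZKernel (Z : Set C) {K A B : C} (ε : K ⟶ A) (f : A ⟶ B) : Prop :=
  IsTrivialMor Z (ε ≫ f) ∧
    ∀ ⦃Y : C⦄ (l : Y ⟶ A), IsTrivialMor Z (l ≫ f) → ∃! l' : Y ⟶ K, l' ≫ ε = l

/-- `π` is a `Z`-cokernel of `f`. -/
def IsZCokernel (Z : Set C) {A B Q : C} (f : A ⟶ B) (π : B ⟶ Q) : Prop :=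
  IsTrivialMor Z (f ≫ π) ∧
    ∀ ⦃Y : C⦄ (l : B ⟶ Y), IsTrivialMor Z (f ≫ l) → ∃! l' : Q ⟶ Y, π ≫ l' = l

/-- `0 → A → X → B → 0` is a short exact sequence: `f` is a kernel of `g`
and `g` is a cokernel of `f`. -/
structure IsShortExactSeq [HasZeroMorphisms C] {A X B : C} (f : A ⟶ X) (g : X ⟶ B) : Prop where
  zero : f ≫ g = 0
  ker : ∀ ⦃Y : C⦄ (l : Y ⟶ X), l ≫ g = 0 → ∃! l' : Y ⟶ A, l' ≫ f = l
  coker : ∀ ⦃Y : C⦄ (l : X ⟶ Y), f ≫ l = 0 → ∃! l' : B ⟶ Y, g ≫ l' = l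

/-- A torsion theory in a pointed category. -/
structure TorsionTheory (C : Type u) [Category.{v} C] [HasZeroMorphisms C] :
    Type (max u v) where
  T : Set C
  F : Set C
  repleteT : ∀ ⦃X Y : C⦄, (X ≅ Y) → X ∈ T → Y ∈ T
  repleteF : ∀ ⦃X Y : C⦄, (X ≅ Y) → X ∈ F → Y ∈ F
  hom_zero : ∀ ⦃X Y : C⦄, X ∈ T → Y ∈ F → ∀ f : X ⟶ Y, f = 0
  exists_seq : ∀ X : C, ∃ (A B : C) (f : A ⟶ X) (g : X ⟶ B),
      A ∈ T ∧ B ∈ F ∧ IsShortExactSeq f g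

/-- A pretorsion theory, with class of trivial objects `T ∩ F`. -/
structure PretorsionTheory (C : Type u) [Category.{v} C] : Type (max u v) where
  T : Set C
  F : Set C
  repleteT : ∀ ⦃X Y : C⦄, (X ≅ Y) → X ∈ T → Y ∈ T
  repleteF : ∀ ⦃X Y : C⦄, (X ≅ Y) → X ∈ F → Y ∈ F
  hom_triv : ∀ ⦃X Y : C⦄, X ∈ T → Y ∈ F → ∀ f : X ⟶ Y, IsTrivialMor (T ∩ F) f
  exists_seq : ∀ X : C, ∃ (A B : C) (f : A ⟶ X) (g : X ⟶ B),
      A ∈ T ∧ B ∈ F ∧ IsZKernel (T ∩ F) f g ∧ IsZCokernel (T ∩ F) f g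

/-- `A ∗ B`: objects that are extensions of an object of `A` by an object of `B`. -/
def extClass [HasZeroMorphisms C] (A B : Set C) : Set C :=
  {X | ∃ (A₀ B₀ : C) (f : A₀ ⟶ X) (g : X ⟶ B₀), A₀ ∈ A ∧ B₀ ∈ B ∧ IsShortExactSeq f g}

/-- A Serre subcategory: closed under subobjects, quotients and extensions. -/
def SerreSub [HasZeroMorphisms C] (S : Set C) : Prop :=
  (∀ ⦃A B : C⦄ (m : A ⟶ B), Mono m → B ∈ S → A ∈ S) ∧
  (∀ ⦃A B : C⦄ (e : A ⟶ B), Epi e → A ∈ S → B ∈ S) ∧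
  (∀ ⦃A X B : C⦄ (f : A ⟶ X) (g : X ⟶ B), IsShortExactSeq f g → A ∈ S → B ∈ S → X ∈ S)

/-- The hom relation identifying morphisms whose difference is `Z`-trivial. -/
def trivRel [Preadditive C] (Z : Set C) : HomRel C :=
  fun {_ _} f g => IsTrivialMor Z (f - g)

section Aux

variable [HasZeroMorphisms C]

lemma ses_mono {A X B : C} {f : A ⟶ X} {g : X ⟶ B} (hses : IsShortExactSeq f g) :
    Mono f := by
  constructor
  intro Y u v huv
  obtain ⟨l, hl, huniq⟩ := hses.ker (u ≫ f)
    (by rw [Category.assoc, hses.zero, comp_zero])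
  rw [huniq u rfl, huniq v huv.symm]

lemma ses_epi {A X B : C} {f : A ⟶ X} {g : X ⟶ B} (hses : IsShortExactSeq f g) :
    Epi g := by
  constructor
  intro Y u v huv
  obtain ⟨l, hl, huniq⟩ := hses.coker (g ≫ u)
    (by rw [← Category.assoc, hses.zero, zero_comp])
  rw [huniq u rfl, huniq v huv.symm]

lemma mem_T_of_hom_zero (TT : TorsionTheory C) {X : C}
    (hX : ∀ F ∈ TT.F, ∀ φ : X ⟶ F, φ = 0) : X ∈ TT.T := by
  obtain ⟨A, B, f, g, hA, hB, hses⟩ := TT.exists_seq X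
  have hg : g = 0 := hX B hB g
  obtain ⟨l, hl, _⟩ := hses.ker (𝟙 X) (by rw [hg, comp_zero])
  have hm : Mono f := ses_mono hses
  have hfl : f ≫ l = 𝟙 A := by
    rw [← cancel_mono f, Category.assoc, hl, Category.comp_id, Category.id_comp]
  exact TT.repleteT ⟨f, l, hfl, hl⟩ hA

lemma mem_F_of_hom_zero (TT : TorsionTheory C) {X : C}
    (hX : ∀ T ∈ TT.T, ∀ φ : T ⟶ X, φ = 0) : X ∈ TT.F := by
  obtain ⟨A, B, f, g, hA, hB, hses⟩ := TT.exists_seq X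
  have hf : f = 0 := hX A hA f
  obtain ⟨l, hl, _⟩ := hses.coker (𝟙 X) (by rw [hf, zero_comp])
  have he : Epi g := ses_epi hses
  have hlg : l ≫ g = 𝟙 B := by
    rw [← cancel_epi g, ← Category.assoc, hl, Category.comp_id, Category.id_comp]
  exact TT.repleteF ⟨l, g, hlg, hl⟩ hB

lemma T_quot (TT : TorsionTheory C) {X B : C} (g : X ⟶ B) (hg : Epi g)
    (hX : X ∈ TT.T) : B ∈ TT.T := by
  apply mem_T_of_hom_zero
  intro F hF φ
  have h0 : g ≫ φ = 0 := TT.hom_zero hX hF _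
  rw [← cancel_epi g, h0, comp_zero]

lemma F_sub (TT : TorsionTheory C) {A X : C} (f : A ⟶ X) (hf : Mono f)
    (hX : X ∈ TT.F) : A ∈ TT.F := by
  apply mem_F_of_hom_zero
  intro T hT φ
  have h0 : φ ≫ f = 0 := TT.hom_zero hT hX _
  rw [← cancel_mono f, h0, zero_comp]

lemma T_ext (TT : TorsionTheory C) {A X B : C} {f : A ⟶ X} {g : X ⟶ B}
    (hses : IsShortExactSeq f g) (hA : A ∈ TT.T) (hB : B ∈ TT.T) : X ∈ TT.T := by
  apply mem_T_of_hom_zero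
  intro F hF φ
  have h1 : f ≫ φ = 0 := TT.hom_zero hA hF _
  obtain ⟨ψ, hψ, _⟩ := hses.coker φ h1
  rw [← hψ, TT.hom_zero hB hF ψ, comp_zero]

lemma F_ext (TT : TorsionTheory C) {A X B : C} {f : A ⟶ X} {g : X ⟶ B}
    (hses : IsShortExactSeq f g) (hA : A ∈ TT.F) (hB : B ∈ TT.F) : X ∈ TT.F := by
  apply mem_F_of_hom_zero
  intro T hT φ
  have h1 : φ ≫ g = 0 := TT.hom_zero hT hB _
  obtain ⟨ψ, hψ, _⟩ := hses.ker φ h1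
  rw [← hψ, TT.hom_zero hT hA ψ, zero_comp]

end Aux

theorem stmt3 [HasZeroObject C] [HasZeroMorphisms C]
    (TT₁ TT₂ : TorsionTheory C) (h : TT₂.T ⊆ TT₁.T) :
    TT₁.T = extClass TT₂.T (TT₁.T ∩ TT₂.F) ∧
    TT₂.F = extClass (TT₁.T ∩ TT₂.F) TT₁.F := by
  have hF : TT₁.F ⊆ TT₂.F := fun Y hY =>
    mem_F_of_hom_zero TT₂ (fun T hT φ => TT₁.hom_zero (h hT) hY φ)
  constructor
  · ext X
    constructor
    · intro hX
      obtain ⟨A, B, f, g, hA, hB, hses⟩ := TT₂.exists_seq X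
      exact ⟨A, B, f, g, hA, ⟨T_quot TT₁ g (ses_epi hses) hX, hB⟩, hses⟩
    · rintro ⟨A, B, f, g, hA, ⟨hB1, _⟩, hses⟩
      exact T_ext TT₁ hses (h hA) hB1
  · ext X
    constructor
    · intro hX
      obtain ⟨A, B, f, g, hA, hB, hses⟩ := TT₁.exists_seq X
      exact ⟨A, B, f, g, ⟨hA, F_sub TT₂ f (ses_mono hses) hX⟩, hB, hses⟩
    · rintro ⟨A, B, f, g, ⟨_, hA2⟩, hB, hses⟩
      exact F_ext TT₂ hses hA2 (hF hB)
end

section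
/- Let C be an abelian category, (U, V) a torsion theory in C, and S a monocoreflective and epireflective Serre subcategory of C. Then the pair (U ∗ S, S ∗ V) is a pretorsion theory in C with class of trivial objects S. -/
open CategoryTheory CategoryTheory.Limits ZeroObject
set_option linter.unusedSectionVars false

universe v u

variable {C : Type u} [Category.{v} C]

section Helpers

variable {A : Type u} [Category.{v} A] [Abelian A]

theorem IsShortExactSeq.mono_f {X Y Z : A} {f : X ⟶ Y} {g : Y ⟶ Z}
    (h : IsShortExactSeq f g) : Mono f := by
  constructor
  intro W a b hab
  have hz : (b ≫ f) ≫ g = 0 := by rw [Category.assoc, h.zero, comp_zero]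
  obtain ⟨l', _, hu⟩ := h.ker (b ≫ f) hz
  exact (hu a hab).trans (hu b rfl).symm

theorem IsShortExactSeq.epi_g {X Y Z : A} {f : X ⟶ Y} {g : Y ⟶ Z}
    (h : IsShortExactSeq f g) : Epi g := by
  constructor
  intro W a b hab
  have hz : f ≫ g ≫ b = 0 := by rw [← Category.assoc, h.zero, zero_comp]
  obtain ⟨l', _, hu⟩ := h.coker (g ≫ b) hz
  exact (hu a hab).trans (hu b rfl).symm

theorem ses_of_mono {X Y : A} (f : X ⟶ Y) [Mono f] : IsShortExactSeq f (cokernel.π f) where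
  zero := cokernel.condition f
  ker := by
    intro Z l hl
    obtain ⟨l', hl'⟩ := KernelFork.IsLimit.lift'
      (Abelian.monoIsKernelOfCokernel _ (cokernelIsCokernel f)) l hl
    exact ⟨l', hl', fun y hy => by rw [← cancel_mono f]; exact hy.trans hl'.symm⟩
  coker := by
    intro Z l hl
    exact ⟨cokernel.desc f l hl, cokernel.π_desc f l hl, fun y hy => by
      rw [← cancel_epi (cokernel.π f), hy, cokernel.π_desc]⟩

theorem ses_of_epi {X Y : A} (g : X ⟶ Y) [Epi g] : IsShortExactSeq (kernel.ι g) g where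
  zero := kernel.condition g
  ker := by
    intro Z l hl
    exact ⟨kernel.lift g l hl, kernel.lift_ι g l hl, fun y hy => by
      rw [← cancel_mono (kernel.ι g), hy, kernel.lift_ι]⟩
  coker := by
    intro Z l hl
    obtain ⟨l', hl'⟩ := CokernelCofork.IsColimit.desc'
      (Abelian.epiIsCokernelOfKernel _ (kernelIsKernel g)) l hl
    exact ⟨l', hl', fun y hy => by rw [← cancel_epi g]; exact hy.trans hl'.symm⟩

end Helpers

section Helpers2

variable {A : Type u} [Category.{v} A] [Abelian A]

theorem IsTrivialMor.precomp {Z : Set A} {X Y W : A} {f : X ⟶ Y}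
    (h : IsTrivialMor Z f) (l : W ⟶ X) : IsTrivialMor Z (l ≫ f) := by
  obtain ⟨W', p, q, hW, hpq⟩ := h
  exact ⟨W', l ≫ p, q, hW, by rw [Category.assoc, hpq]⟩

theorem IsTrivialMor.postcomp {Z : Set A} {X Y W : A} {f : X ⟶ Y}
    (h : IsTrivialMor Z f) (l : Y ⟶ W) : IsTrivialMor Z (f ≫ l) := by
  obtain ⟨W', p, q, hW, hpq⟩ := h
  exact ⟨W', p, q ≫ l, hW, by rw [← Category.assoc, hpq]⟩

theorem mono_of_isZKernel_id {Z : Set A} {K X : A} {ε : K ⟶ X}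
    (h : IsZKernel Z ε (𝟙 X)) : Mono ε := by
  constructor
  intro W a b hab
  have htriv : IsTrivialMor Z ((b ≫ ε) ≫ 𝟙 X) := by
    rw [Category.comp_id]
    have := h.1
    rw [Category.comp_id] at this
    exact this.precomp b
  obtain ⟨l', _, hu⟩ := h.2 (b ≫ ε) htriv
  exact (hu a hab).trans (hu b rfl).symm

theorem epi_of_isZCokernel_id {Z : Set A} {X Q : A} {π : X ⟶ Q}
    (h : IsZCokernel Z (𝟙 X) π) : Epi π := by
  constructor
  intro W a b hab
  have htriv : IsTrivialMor Z (𝟙 X ≫ π ≫ b) := by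
    rw [Category.id_comp]
    have := h.1
    rw [Category.id_comp] at this
    exact this.postcomp b
  obtain ⟨l', _, hu⟩ := h.2 (π ≫ b) htriv
  exact (hu a hab).trans (hu b rfl).symm

theorem mem_of_isZKernel_id {S : Set A} (hS : SerreSub S) {K X : A} {ε : K ⟶ X}
    (h : IsZKernel S ε (𝟙 X)) : K ∈ S := by
  have hm : Mono ε := mono_of_isZKernel_id h
  obtain ⟨W, p, q, hW, hpq⟩ := h.1
  rw [Category.comp_id] at hpq
  have : Mono p := by
    have : Mono (p ≫ q) := by rw [hpq]; exact hm
    exact mono_of_mono p q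
  exact hS.1 p this hW

theorem mem_of_isZCokernel_id {S : Set A} (hS : SerreSub S) {X Q : A} {π : X ⟶ Q}
    (h : IsZCokernel S (𝟙 X) π) : Q ∈ S := by
  have he : Epi π := epi_of_isZCokernel_id h
  obtain ⟨W, p, q, hW, hpq⟩ := h.1
  rw [Category.id_comp] at hpq
  have : Epi q := by
    have : Epi (p ≫ q) := by rw [hpq]; exact he
    exact epi_of_epi p q
  exact hS.2.1 q this hW

theorem zero_mem_T (TT : TorsionTheory A) : (0 : A) ∈ TT.T := by
  obtain ⟨T₀, F₀, f, g, hT, _, hs⟩ := TT.exists_seq (0 : A)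
  have hm : Mono f := hs.mono_f
  have hf : f = 0 := (isZero_zero A).eq_of_tgt f 0
  have hid : 𝟙 T₀ = 0 := by rw [← cancel_mono f]; simp [hf]
  exact TT.repleteT ((idZeroEquivIsoZero T₀) hid) hT

theorem zero_mem_F (TT : TorsionTheory A) : (0 : A) ∈ TT.F := by
  obtain ⟨T₀, F₀, f, g, _, hF, hs⟩ := TT.exists_seq (0 : A)
  have he : Epi g := hs.epi_g
  have hg : g = 0 := (isZero_zero A).eq_of_src g 0
  have hid : 𝟙 F₀ = 0 := by rw [← cancel_epi g]; simp [hg]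
  exact TT.repleteF ((idZeroEquivIsoZero F₀) hid) hF

theorem T_quot_s9 (TT : TorsionTheory A) {X Q : A} (e : X ⟶ Q) (he : Epi e)
    (hX : X ∈ TT.T) : Q ∈ TT.T := by
  obtain ⟨T₀, F₀, f, g, hT, hF, hs⟩ := TT.exists_seq Q
  have hg0 : g = 0 := by
    have h1 : e ≫ g = 0 := TT.hom_zero hX hF (e ≫ g)
    haveI := he
    rw [← cancel_epi e]; simp [h1]
  obtain ⟨s, hsf, _⟩ := hs.ker (𝟙 Q) (by simp [hg0])
  haveI : Mono f := hs.mono_f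
  haveI : Epi f := epi_of_epi_fac hsf
  haveI : IsIso f := isIso_of_mono_of_epi f
  exact TT.repleteT (asIso f) hT

theorem F_sub_s9 (TT : TorsionTheory A) {X Y : A} (m : X ⟶ Y) (hm : Mono m)
    (hY : Y ∈ TT.F) : X ∈ TT.F := by
  obtain ⟨T₀, F₀, f, g, hT, hF, hs⟩ := TT.exists_seq X
  have hf0 : f = 0 := by
    have h1 : f ≫ m = 0 := TT.hom_zero hT hY (f ≫ m)
    haveI := hm
    rw [← cancel_mono m]; simp [h1]
  obtain ⟨r, hr, _⟩ := hs.coker (𝟙 X) (by simp [hf0])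
  haveI : Epi g := hs.epi_g
  haveI : Mono g := mono_of_mono_fac hr
  haveI : IsIso g := isIso_of_mono_of_epi g
  exact TT.repleteF (asIso g).symm hF

theorem extClass_replete {U V : Set A} {X Y : A} (e : X ≅ Y)
    (hX : X ∈ extClass U V) : Y ∈ extClass U V := by
  obtain ⟨A₀, B₀, f, g, hA, hB, hs⟩ := hX
  refine ⟨A₀, B₀, f ≫ e.hom, e.inv ≫ g, hA, hB, ?_, ?_, ?_⟩
  · rw [Category.assoc, Iso.hom_inv_id_assoc]; exact hs.zero
  · intro Z l hl
    obtain ⟨l', h1, h2⟩ := hs.ker (l ≫ e.inv) (by rw [Category.assoc]; exact hl)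
    refine ⟨l', ?_, fun y hy => h2 y ?_⟩
    · show l' ≫ f ≫ e.hom = l
      rw [← Category.assoc, h1]; simp
    · show y ≫ f = l ≫ e.inv
      have hy' : y ≫ f ≫ e.hom = l := hy
      rw [← hy']; simp
  · intro Z l hl
    obtain ⟨l', h1, h2⟩ := hs.coker (e.hom ≫ l) (by rw [← Category.assoc]; exact hl)
    refine ⟨l', ?_, fun y hy => h2 y ?_⟩
    · show (e.inv ≫ g) ≫ l' = l
      rw [Category.assoc, h1]; simp
    · show g ≫ y = e.hom ≫ l
      have hy' : (e.inv ≫ g) ≫ y = l := hy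
      rw [← hy']; simp

end Helpers2

section Main

variable {A : Type u} [Category.{v} A] [Abelian A]

theorem ses_zero_id (X : A) : IsShortExactSeq (0 : (0 : A) ⟶ X) (𝟙 X) where
  zero := zero_comp
  ker := by
    intro Y l hl
    rw [Category.comp_id] at hl
    exact ⟨0, by simp [hl], fun y _ => (isZero_zero A).eq_of_tgt y 0⟩
  coker := by
    intro Y l _
    exact ⟨l, Category.id_comp l, fun y hy => by rw [← hy, Category.id_comp]⟩

theorem ses_id_zero (X : A) : IsShortExactSeq (𝟙 X) (0 : X ⟶ (0 : A)) where
  zero := comp_zero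
  ker := by
    intro Y l _
    exact ⟨l, Category.comp_id l, fun y hy => by rw [← hy, Category.comp_id]⟩
  coker := by
    intro Y l hl
    rw [Category.id_comp] at hl
    exact ⟨0, by simp [hl], fun y _ => (isZero_zero A).eq_of_src y 0⟩

theorem extT_quot (TT : TorsionTheory A) (S : Set A) (hS : SerreSub S)
    {X Q : A} (e : X ⟶ Q) (he : Epi e)
    (hX : X ∈ extClass TT.T S) : Q ∈ extClass TT.T S := by
  obtain ⟨T₀, S₀, t, σ, hT, hS₀, hs⟩ := hX
  haveI := he
  set c := t ≫ e with hc
  have hI : Abelian.image c ∈ TT.T := T_quot_s9 TT (Abelian.factorThruImage c) inferInstance hT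
  have hcπ : c ≫ cokernel.π (Abelian.image.ι c) = 0 := by
    calc c ≫ cokernel.π (Abelian.image.ι c)
        = Abelian.factorThruImage c ≫ Abelian.image.ι c ≫ cokernel.π (Abelian.image.ι c) := by
          rw [← Category.assoc, Abelian.image.fac]
      _ = 0 := by rw [cokernel.condition, comp_zero]
  have h0 : t ≫ (e ≫ cokernel.π (Abelian.image.ι c)) = 0 := by
    rw [← Category.assoc]; exact hcπ
  obtain ⟨w, hw, _⟩ := hs.coker (e ≫ cokernel.π (Abelian.image.ι c)) h0
  have hwe : Epi w := by
    haveI : Epi (σ ≫ w) := by rw [hw]; exact epi_comp _ _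
    exact epi_of_epi σ w
  exact ⟨Abelian.image c, cokernel (Abelian.image.ι c), Abelian.image.ι c,
    cokernel.π _, hI, hS.2.1 w hwe hS₀, ses_of_mono _⟩

theorem extF_sub (TT : TorsionTheory A) (S : Set A) (hS : SerreSub S)
    {X Y : A} (m : X ⟶ Y) (hm : Mono m)
    (hY : Y ∈ extClass S TT.F) : X ∈ extClass S TT.F := by
  obtain ⟨S₁, F₀, s, φ, hS₁, hF, hs⟩ := hY
  haveI := hm
  set c := m ≫ φ with hc
  have hI : Abelian.image c ∈ TT.F := F_sub_s9 TT (Abelian.image.ι c) inferInstance hF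
  have hk : kernel.ι (Abelian.factorThruImage c) ≫ c = 0 := by
    calc kernel.ι (Abelian.factorThruImage c) ≫ c
        = kernel.ι (Abelian.factorThruImage c) ≫ Abelian.factorThruImage c ≫ Abelian.image.ι c := by
          rw [Abelian.image.fac]
      _ = 0 := by rw [← Category.assoc, kernel.condition, zero_comp]
  have h0 : (kernel.ι (Abelian.factorThruImage c) ≫ m) ≫ φ = 0 := by
    rw [Category.assoc, ← hc]; exact hk
  obtain ⟨u, hu, _⟩ := hs.ker (kernel.ι (Abelian.factorThruImage c) ≫ m) h0
  have hum : Mono u := by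
    haveI : Mono (u ≫ s) := by rw [hu]; exact mono_comp _ _
    exact mono_of_mono u s
  exact ⟨kernel (Abelian.factorThruImage c), Abelian.image c,
    kernel.ι _, Abelian.factorThruImage c, hS.1 u hum hS₁, hI, ses_of_epi _⟩

theorem inter_eq (TT : TorsionTheory A) (S : Set A) (hS : SerreSub S) :
    extClass TT.T S ∩ extClass S TT.F = S := by
  apply Set.Subset.antisymm
  · rintro X ⟨⟨T₀, S₀, t, σ, hT, hS₀, hs1⟩, ⟨S₁, F₀, s, φ, hS₁, hF, hs2⟩⟩
    have h0 : t ≫ φ = 0 := TT.hom_zero hT hF _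
    obtain ⟨u, hu, _⟩ := hs2.ker t h0
    have hum : Mono u := by
      haveI : Mono (u ≫ s) := by rw [hu]; exact hs1.mono_f
      exact mono_of_mono u s
    exact hS.2.2 t σ hs1 (hS.1 u hum hS₁) hS₀
  · intro X hX
    exact ⟨⟨0, X, 0, 𝟙 X, zero_mem_T TT, hX, ses_zero_id X⟩,
      ⟨X, 0, 𝟙 X, 0, hX, zero_mem_F TT, ses_id_zero X⟩⟩

theorem homTriv (TT : TorsionTheory A) (S : Set A) (hS : SerreSub S)
    {X Y : A} (hX : X ∈ extClass TT.T S) (hY : Y ∈ extClass S TT.F)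
    (f : X ⟶ Y) : IsTrivialMor (extClass TT.T S ∩ extClass S TT.F) f :=
  ⟨Abelian.image f, Abelian.factorThruImage f, Abelian.image.ι f,
    ⟨extT_quot TT S hS (Abelian.factorThruImage f) inferInstance hX,
     extF_sub TT S hS (Abelian.image.ι f) inferInstance hY⟩,
    Abelian.image.fac f⟩

theorem triv_of_triv_comp_cokernel (S : Set A) (hS : SerreSub S)
    {SF F₀ : A} (ε : SF ⟶ F₀) (hε : Mono ε) (hSF : SF ∈ S)
    {Y : A} (m : Y ⟶ F₀) (h : IsTrivialMor S (m ≫ cokernel.π ε)) :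
    IsTrivialMor S m := by
  haveI := hε
  obtain ⟨W, a, b, hW, hab⟩ := h
  haveI : Epi (pullback.fst b (cokernel.π ε)) := inferInstance
  set ι := kernel.ι (pullback.fst b (cokernel.π ε)) with hιdef
  have h1 : (ι ≫ pullback.snd b (cokernel.π ε)) ≫ cokernel.π ε = 0 := by
    rw [Category.assoc, ← pullback.condition, ← Category.assoc, kernel.condition, zero_comp]
  obtain ⟨v, hv, _⟩ := (ses_of_mono ε).ker (ι ≫ pullback.snd b (cokernel.π ε)) h1
  have hεtil : (0 : SF ⟶ W) ≫ b = ε ≫ cokernel.π ε := by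
    rw [zero_comp, cokernel.condition]
  set εtil := pullback.lift (0 : SF ⟶ W) ε hεtil with hεtildef
  set u := kernel.lift (pullback.fst b (cokernel.π ε)) εtil (pullback.lift_fst _ _ _) with hudef
  have huι : u ≫ ι = εtil := kernel.lift_ι _ _ _
  have huv : u ≫ v = 𝟙 SF := by
    rw [← cancel_mono ε]
    rw [Category.assoc, hv, ← Category.assoc, huι, Category.id_comp]
    exact pullback.lift_snd _ _ _
  have hvu : v ≫ u = 𝟙 _ := by
    rw [← cancel_mono ι]
    rw [Category.assoc, huι, Category.id_comp]
    apply pullback.hom_ext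
    · rw [Category.assoc, pullback.lift_fst, comp_zero, kernel.condition]
    · rw [Category.assoc, pullback.lift_snd, hv]
  have hvm : Mono v := by
    haveI : IsIso v := ⟨u, hvu, huv⟩
    infer_instance
  have hK : kernel (pullback.fst b (cokernel.π ε)) ∈ S := hS.1 v hvm hSF
  have hP : pullback b (cokernel.π ε) ∈ S :=
    hS.2.2 ι (pullback.fst b (cokernel.π ε)) (ses_of_epi _) hK hW
  exact ⟨pullback b (cokernel.π ε), pullback.lift a m hab, pullback.snd b (cokernel.π ε),
    hP, pullback.lift_snd _ _ _⟩

end Main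

section Final

variable {A : Type u} [Category.{v} A] [Abelian A]

theorem exists_seq_main (TT : TorsionTheory A) (S : Set A) (hS : SerreSub S)
    (hMonoCoref : ∀ X : A, ∃ (K : A) (ε : K ⟶ X), IsZKernel S ε (𝟙 X))
    (hEpiRef : ∀ X : A, ∃ (Q : A) (π : X ⟶ Q), IsZCokernel S (𝟙 X) π)
    (X : A) :
    ∃ (A' B' : A) (f : A' ⟶ X) (g : X ⟶ B'),
      A' ∈ extClass TT.T S ∧ B' ∈ extClass S TT.F ∧
      IsZKernel S f g ∧ IsZCokernel S f g := by
  obtain ⟨T₀, F₀, t, φ, hT, hF, hst⟩ := TT.exists_seq X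
  obtain ⟨SF, ε, hεZK⟩ := hMonoCoref F₀
  obtain ⟨QT, πT, hπZC⟩ := hEpiRef T₀
  haveI hεm : Mono ε := mono_of_isZKernel_id hεZK
  have hSF : SF ∈ S := mem_of_isZKernel_id hS hεZK
  haveI hπe : Epi πT := epi_of_isZCokernel_id hπZC
  have hQT : QT ∈ S := mem_of_isZCokernel_id hS hπZC
  haveI hφe : Epi φ := hst.epi_g
  haveI htm : Mono t := hst.mono_f
  haveI : Mono (pullback.fst φ ε) := inferInstance
  haveI : Epi (pullback.snd φ ε) := inferInstance
  haveI : Epi (pushout.inl t πT) := inferInstance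
  have ht0 : t ≫ φ = (0 : T₀ ⟶ SF) ≫ ε := by rw [hst.zero, zero_comp]
  have httilf : pullback.lift t 0 ht0 ≫ pullback.fst φ ε = t := pullback.lift_fst _ _ _
  have httils : pullback.lift t 0 ht0 ≫ pullback.snd φ ε = 0 := pullback.lift_snd _ _ _
  -- the kernel of `snd` is isomorphic to T₀
  have hKT : kernel (pullback.snd φ ε) ∈ TT.T := by
    have h1 : (kernel.ι (pullback.snd φ ε) ≫ pullback.fst φ ε) ≫ φ = 0 := by
      rw [Category.assoc, pullback.condition, ← Category.assoc, kernel.condition, zero_comp]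
    obtain ⟨v, hv, _⟩ := hst.ker (kernel.ι (pullback.snd φ ε) ≫ pullback.fst φ ε) h1
    have huι : kernel.lift (pullback.snd φ ε) (pullback.lift t 0 ht0) httils ≫
        kernel.ι (pullback.snd φ ε) = pullback.lift t 0 ht0 := kernel.lift_ι _ _ _
    have huv : kernel.lift (pullback.snd φ ε) (pullback.lift t 0 ht0) httils ≫ v = 𝟙 T₀ := by
      rw [← cancel_mono t, Category.assoc, hv, ← Category.assoc, huι, Category.id_comp, httilf]
    have hvu : v ≫ kernel.lift (pullback.snd φ ε) (pullback.lift t 0 ht0) httils = 𝟙 _ := by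
      rw [← cancel_mono (kernel.ι (pullback.snd φ ε)), Category.assoc, huι, Category.id_comp]
      apply pullback.hom_ext
      · rw [Category.assoc, httilf, hv]
      · rw [Category.assoc, httils, comp_zero, kernel.condition]
    exact TT.repleteT ⟨kernel.lift (pullback.snd φ ε) (pullback.lift t 0 ht0) httils, v, huv, hvu⟩ hT
  have hAmem : pullback φ ε ∈ extClass TT.T S :=
    ⟨kernel (pullback.snd φ ε), SF, kernel.ι _, pullback.snd φ ε, hKT, hSF, ses_of_epi _⟩
  -- the cokernel of the image of `inr` is isomorphic to F₀
  have hinrπ : pushout.inr t πT ≫ cokernel.π (Abelian.image.ι (pushout.inr t πT)) = 0 := by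
    calc pushout.inr t πT ≫ cokernel.π (Abelian.image.ι (pushout.inr t πT))
        = Abelian.factorThruImage (pushout.inr t πT) ≫ Abelian.image.ι (pushout.inr t πT) ≫
            cokernel.π (Abelian.image.ι (pushout.inr t πT)) := by
          rw [← Category.assoc, Abelian.image.fac]
      _ = 0 := by rw [cokernel.condition, comp_zero]
  have hψcond : t ≫ φ = πT ≫ (0 : QT ⟶ F₀) := by rw [hst.zero, comp_zero]
  have hψl : pushout.inl t πT ≫ pushout.desc φ 0 hψcond = φ := pushout.inl_desc _ _ _
  have hψr : pushout.inr t πT ≫ pushout.desc φ 0 hψcond = 0 := pushout.inr_desc _ _ _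
  have hBF : cokernel (Abelian.image.ι (pushout.inr t πT)) ∈ TT.F := by
    have h2 : t ≫ pushout.inl t πT ≫ cokernel.π (Abelian.image.ι (pushout.inr t πT)) = 0 := by
      rw [← Category.assoc, pushout.condition, Category.assoc, hinrπ, comp_zero]
    obtain ⟨w, hw, _⟩ := hst.coker
      (pushout.inl t πT ≫ cokernel.π (Abelian.image.ι (pushout.inr t πT))) h2
    have hmψ : Abelian.image.ι (pushout.inr t πT) ≫ pushout.desc φ 0 hψcond = 0 := by
      rw [← cancel_epi (Abelian.factorThruImage (pushout.inr t πT)), ← Category.assoc,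
        Abelian.image.fac, hψr, comp_zero]
    have hπu : cokernel.π (Abelian.image.ι (pushout.inr t πT)) ≫
        cokernel.desc (Abelian.image.ι (pushout.inr t πT)) (pushout.desc φ 0 hψcond) hmψ
        = pushout.desc φ 0 hψcond := cokernel.π_desc _ _ _
    have hwu : w ≫ cokernel.desc (Abelian.image.ι (pushout.inr t πT))
        (pushout.desc φ 0 hψcond) hmψ = 𝟙 F₀ := by
      rw [← cancel_epi φ, ← Category.assoc, hw, Category.assoc, hπu, hψl, Category.comp_id]
    have huw : cokernel.desc (Abelian.image.ι (pushout.inr t πT))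
        (pushout.desc φ 0 hψcond) hmψ ≫ w = 𝟙 _ := by
      rw [← cancel_epi (cokernel.π (Abelian.image.ι (pushout.inr t πT))), ← Category.assoc,
        hπu, Category.comp_id]
      apply pushout.hom_ext
      · rw [← Category.assoc, hψl, hw]
      · rw [← Category.assoc, hψr, zero_comp, hinrπ]
    exact TT.repleteF ⟨w, cokernel.desc _ _ hmψ, hwu, huw⟩ hF
  have hBmem : pushout t πT ∈ extClass S TT.F :=
    ⟨Abelian.image (pushout.inr t πT), cokernel (Abelian.image.ι (pushout.inr t πT)),
      Abelian.image.ι _, cokernel.π _,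
      hS.2.1 (Abelian.factorThruImage (pushout.inr t πT)) inferInstance hQT, hBF, ses_of_mono _⟩
  have htriv : IsTrivialMor S (pullback.fst φ ε ≫ pushout.inl t πT) := by
    have h := homTriv TT S hS hAmem hBmem (pullback.fst φ ε ≫ pushout.inl t πT)
    rwa [inter_eq TT S hS] at h
  refine ⟨pullback φ ε, pushout t πT, pullback.fst φ ε, pushout.inl t πT, hAmem, hBmem,
    ⟨htriv, ?_⟩, ⟨htriv, ?_⟩⟩
  · intro Y l hl
    have hθcond : t ≫ φ ≫ cokernel.π ε = πT ≫ (0 : QT ⟶ cokernel ε) := by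
      rw [← Category.assoc, hst.zero, zero_comp, comp_zero]
    have h2 : IsTrivialMor S ((l ≫ φ) ≫ cokernel.π ε) := by
      have h := hl.postcomp (pushout.desc (φ ≫ cokernel.π ε) 0 hθcond)
      have heq : (l ≫ pushout.inl t πT) ≫ pushout.desc (φ ≫ cokernel.π ε) 0 hθcond
          = (l ≫ φ) ≫ cokernel.π ε := by
        rw [Category.assoc, pushout.inl_desc, ← Category.assoc, Category.assoc]
      rwa [heq] at h
    have h3 : IsTrivialMor S (l ≫ φ) := triv_of_triv_comp_cokernel S hS ε hεm hSF _ h2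
    obtain ⟨u2, hu2, _⟩ := hεZK.2 (l ≫ φ) (by rwa [Category.comp_id])
    refine ⟨pullback.lift l u2 hu2.symm, pullback.lift_fst _ _ _, fun y hy => ?_⟩
    rw [← cancel_mono (pullback.fst φ ε)]
    exact hy.trans (pullback.lift_fst _ _ _).symm
  · intro Y l hl
    have h4 : IsTrivialMor S (t ≫ l) := by
      have h := hl.precomp (pullback.lift t 0 ht0)
      have heq : pullback.lift t 0 ht0 ≫ pullback.fst φ ε ≫ l = t ≫ l := by
        rw [← Category.assoc, httilf]
      rwa [heq] at h
    obtain ⟨v2, hv2, _⟩ := hπZC.2 (t ≫ l) (by rwa [Category.id_comp])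
    refine ⟨pushout.desc l v2 hv2.symm, pushout.inl_desc _ _ _, fun y hy => ?_⟩
    rw [← cancel_epi (pushout.inl t πT)]
    exact hy.trans (pushout.inl_desc _ _ _).symm

end Final

theorem stmt9 {A : Type u} [Category.{v} A] [Abelian A]
    (TT : TorsionTheory A) (S : Set A) (hS : SerreSub S)
    (hMonoCoref : ∀ X : A, ∃ (K : A) (ε : K ⟶ X), IsZKernel S ε (𝟙 X))
    (hEpiRef : ∀ X : A, ∃ (Q : A) (π : X ⟶ Q), IsZCokernel S (𝟙 X) π) :
    ∃ P : PretorsionTheory A,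
      P.T = extClass TT.T S ∧ P.F = extClass S TT.F ∧
      extClass TT.T S ∩ extClass S TT.F = S := by
  have hTF := inter_eq TT S hS
  refine ⟨⟨extClass TT.T S, extClass S TT.F,
    fun X Y e h => extClass_replete e h,
    fun X Y e h => extClass_replete e h,
    fun X Y hX hY f => homTriv TT S hS hX hY f, ?_⟩, rfl, rfl, hTF⟩
  intro X
  rw [hTF]
  exact exists_seq_main TT S hS hMonoCoref hEpiRef X
end

section
/- Let C be an additive category and (T, F) a pretorsion theory with trivial class Z. Then (Σ(T), Σ(F)) is a torsion theory in the quotient category C/Z, where Σ : C → C/Z is the quotient functor by the ideal of Z-trivial morphisms. -/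
open CategoryTheory CategoryTheory.Limits

universe v u

variable {C : Type u} [Category.{v} C]

/-!
Morphisms factoring through `Z = T ∩ F` form an ideal. The only nontrivial point is closure
under sums: for `W₁, W₂ ∈ Z`, the maps out of `T` into `W₁ ⊞ W₂` lift along the `Z`-kernel `a`
and the maps out of `W₁ ⊞ W₂` into `F` extend along the `Z`-cokernel `b` of its pretorsion
sequence, so `𝟙 (W₁ ⊞ W₂)` factors through `a ≫ b`, hence through `Z`. In `C/Z` the
hom-vanishing is then immediate, and the pretorsion sequences become short exact because
`Z`-kernels (`Z`-cokernels) reflect triviality under postcomposition (precomposition).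
-/

namespace IsTrivialMor

variable {Z : Set C}

lemma precomp_s12 {X Y W : C} {f : X ⟶ Y} (h : IsTrivialMor Z f) (g : W ⟶ X) :
    IsTrivialMor Z (g ≫ f) := by
  obtain ⟨V, p, q, hV, rfl⟩ := h
  exact ⟨V, g ≫ p, q, hV, Category.assoc _ _ _⟩

lemma postcomp_s12 {X Y W : C} {f : X ⟶ Y} (h : IsTrivialMor Z f) (g : Y ⟶ W) :
    IsTrivialMor Z (f ≫ g) := by
  obtain ⟨V, p, q, hV, rfl⟩ := h
  exact ⟨V, p, q ≫ g, hV, (Category.assoc _ _ _).symm⟩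

lemma of_mem_left {V Y : C} (hV : V ∈ Z) (f : V ⟶ Y) : IsTrivialMor Z f :=
  ⟨V, 𝟙 V, f, hV, Category.id_comp f⟩

lemma of_mem_right {X V : C} (hV : V ∈ Z) (f : X ⟶ V) : IsTrivialMor Z f :=
  ⟨V, f, 𝟙 V, hV, Category.comp_id f⟩

lemma neg [Preadditive C] {X Y : C} {f : X ⟶ Y} (h : IsTrivialMor Z f) :
    IsTrivialMor Z (-f) := by
  obtain ⟨V, p, q, hV, rfl⟩ := h
  exact ⟨V, -p, q, hV, Preadditive.neg_comp _ _⟩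

lemma id_of_split {A X B : C} {a : A ⟶ X} {b : X ⟶ B} (h : IsTrivialMor Z (a ≫ b))
    {s : X ⟶ A} {r : B ⟶ X} (hs : s ≫ a = 𝟙 X) (hr : b ≫ r = 𝟙 X) :
    IsTrivialMor Z (𝟙 X) := by
  simpa [hs, hr] using (h.precomp_s12 s).postcomp_s12 r

end IsTrivialMor

section ZExact

variable {Z : Set C} {A X B W : C} {f : A ⟶ X} {g : X ⟶ B}

lemma IsZKernel.isTrivialMor_of_comp (hk : IsZKernel Z f g) {u : W ⟶ A}
    (hu : IsTrivialMor Z (u ≫ f)) : IsTrivialMor Z u := by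
  obtain ⟨V, s, t, hV, hst⟩ := hu
  obtain ⟨t', ht', -⟩ := hk.2 t (.of_mem_left hV _)
  obtain ⟨v, -, hv⟩ := hk.2 (u ≫ f) (by simpa using hk.1.precomp_s12 u)
  have hst' : (s ≫ t') ≫ f = u ≫ f := by rw [Category.assoc, ht', hst]
  exact ⟨V, s, t', hV, (hv _ hst').trans (hv u rfl).symm⟩

lemma IsZCokernel.isTrivialMor_of_comp (hc : IsZCokernel Z f g) {u : B ⟶ W}
    (hu : IsTrivialMor Z (g ≫ u)) : IsTrivialMor Z u := by
  obtain ⟨V, s, t, hV, hst⟩ := hu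
  obtain ⟨s', hs', -⟩ := hc.2 s (.of_mem_right hV _)
  obtain ⟨v, -, hv⟩ := hc.2 (g ≫ u) (by simpa using hc.1.postcomp_s12 u)
  have hst' : g ≫ s' ≫ t = g ≫ u := by rw [← Category.assoc, hs', hst]
  exact ⟨V, s', t, hV, (hv _ hst').trans (hv u rfl).symm⟩

end ZExact

namespace PretorsionTheory

variable (P : PretorsionTheory C)

lemma isTrivialMor_zero [HasZeroMorphisms C] {X Y : C} :
    IsTrivialMor (P.T ∩ P.F) (0 : X ⟶ Y) := by
  obtain ⟨A, B, f, g, hA, hB, -⟩ := P.exists_seq X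
  obtain ⟨W, -, -, hW, -⟩ := P.hom_triv hA hB (f ≫ g)
  exact ⟨W, 0, 0, hW, HasZeroMorphisms.comp_zero _ _⟩

lemma isTrivialMor_id_biprod [Preadditive C] [HasBinaryBiproducts C] {W₁ W₂ : C}
    (hW₁ : W₁ ∈ P.T ∩ P.F) (hW₂ : W₂ ∈ P.T ∩ P.F) :
    IsTrivialMor (P.T ∩ P.F) (𝟙 (W₁ ⊞ W₂)) := by
  obtain ⟨A, B, a, b, hA, hB, hk, hc⟩ := P.exists_seq (W₁ ⊞ W₂)
  obtain ⟨l₁, hl₁, -⟩ := hk.2 biprod.inl (P.hom_triv hW₁.1 hB _)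
  obtain ⟨l₂, hl₂, -⟩ := hk.2 biprod.inr (P.hom_triv hW₂.1 hB _)
  obtain ⟨m₁, hm₁, -⟩ := hc.2 biprod.fst (P.hom_triv hA hW₁.2 _)
  obtain ⟨m₂, hm₂, -⟩ := hc.2 biprod.snd (P.hom_triv hA hW₂.2 _)
  refine hk.1.id_of_split (s := biprod.desc l₁ l₂) (r := biprod.lift m₁ m₂) ?_ ?_
  · ext <;> simp [hl₁, hl₂]
  · ext <;> simp [hm₁, hm₂]

lemma isTrivialMor_add [Preadditive C] [HasBinaryBiproducts C] {X Y : C} {f₁ f₂ : X ⟶ Y}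
    (h₁ : IsTrivialMor (P.T ∩ P.F) f₁) (h₂ : IsTrivialMor (P.T ∩ P.F) f₂) :
    IsTrivialMor (P.T ∩ P.F) (f₁ + f₂) := by
  obtain ⟨W₁, p₁, q₁, hW₁, rfl⟩ := h₁
  obtain ⟨W₂, p₂, q₂, hW₂, rfl⟩ := h₂
  simpa using ((P.isTrivialMor_id_biprod hW₁ hW₂).precomp_s12 (biprod.lift p₁ p₂)).postcomp_s12
    (biprod.desc q₁ q₂)

instance congruence [Preadditive C] [HasBinaryBiproducts C] :
    Congruence (trivRel (P.T ∩ P.F)) where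
  equivalence :=
    { refl := fun f => by simpa [trivRel] using P.isTrivialMor_zero
      symm := fun h => by simpa [trivRel] using IsTrivialMor.neg h
      trans := fun h₁ h₂ => by simpa [trivRel] using P.isTrivialMor_add h₁ h₂ }
  comp_left f _ _ h := by simpa [trivRel, Preadditive.comp_sub] using IsTrivialMor.precomp_s12 h f
  comp_right g h := by simpa [trivRel, Preadditive.sub_comp] using IsTrivialMor.postcomp_s12 h g

end PretorsionTheory

section Quotient

variable [Preadditive C] {Z : Set C} [Congruence (trivRel Z)]

local notation "σ" => Quotient.functor (trivRel Z)

lemma map_eq_map_zero_iff {X Y : C} (u : X ⟶ Y) :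
    (σ).map u = (σ).map 0 ↔ IsTrivialMor Z u := by
  rw [Quotient.functor_map_eq_iff]
  simp [trivRel]

variable {A X B : C} {f : A ⟶ X} {g : X ⟶ B}

lemma IsZKernel.map_comp_map (hk : IsZKernel Z f g) : (σ).map f ≫ (σ).map g = (σ).map 0 := by
  rw [← Functor.map_comp, map_eq_map_zero_iff]
  exact hk.1

lemma IsZKernel.existsUnique_quotient_lift (hk : IsZKernel Z f g) {W : C}
    (h : (σ).obj W ⟶ (σ).obj X) (hh : h ≫ (σ).map g = (σ).map 0) :
    ∃! k : (σ).obj W ⟶ (σ).obj A, k ≫ (σ).map f = h := by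
  obtain ⟨l, rfl⟩ := (σ).map_surjective h
  rw [← Functor.map_comp, map_eq_map_zero_iff] at hh
  obtain ⟨l', hl', -⟩ := hk.2 l hh
  refine ⟨(σ).map l', by dsimp only; rw [← Functor.map_comp, hl'], fun k hkl => ?_⟩
  obtain ⟨k, rfl⟩ := (σ).map_surjective k
  rw [← hl', ← Functor.map_comp, Quotient.functor_map_eq_iff] at hkl
  rw [Quotient.functor_map_eq_iff]
  exact hk.isTrivialMor_of_comp (by simpa [trivRel, Preadditive.sub_comp] using hkl)

lemma IsZCokernel.existsUnique_quotient_desc (hc : IsZCokernel Z f g) {W : C}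
    (h : (σ).obj X ⟶ (σ).obj W) (hh : (σ).map f ≫ h = (σ).map 0) :
    ∃! k : (σ).obj B ⟶ (σ).obj W, (σ).map g ≫ k = h := by
  obtain ⟨l, rfl⟩ := (σ).map_surjective h
  rw [← Functor.map_comp, map_eq_map_zero_iff] at hh
  obtain ⟨l', hl', -⟩ := hc.2 l hh
  refine ⟨(σ).map l', by dsimp only; rw [← Functor.map_comp, hl'], fun k hkl => ?_⟩
  obtain ⟨k, rfl⟩ := (σ).map_surjective k
  rw [← hl', ← Functor.map_comp, Quotient.functor_map_eq_iff] at hkl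
  rw [Quotient.functor_map_eq_iff]
  exact hc.isTrivialMor_of_comp (by simpa [trivRel, Preadditive.comp_sub] using hkl)

end Quotient

theorem stmt12_general [Preadditive C] [HasFiniteBiproducts C]
    (P : PretorsionTheory C) :
    letI σ := Quotient.functor (trivRel (P.T ∩ P.F))
    (∀ X ∈ P.T, ∀ Y ∈ P.F, ∀ h : σ.obj X ⟶ σ.obj Y, h = σ.map (0 : X ⟶ Y)) ∧
    (∀ X : C, ∃ (A B : C) (f : A ⟶ X) (g : X ⟶ B), A ∈ P.T ∧ B ∈ P.F ∧
      σ.map f ≫ σ.map g = σ.map (0 : A ⟶ B) ∧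
      (∀ (W : C) (h : σ.obj W ⟶ σ.obj X), h ≫ σ.map g = σ.map (0 : W ⟶ B) →
        ∃! k : σ.obj W ⟶ σ.obj A, k ≫ σ.map f = h) ∧
      (∀ (W : C) (h : σ.obj X ⟶ σ.obj W), σ.map f ≫ h = σ.map (0 : A ⟶ W) →
        ∃! k : σ.obj B ⟶ σ.obj W, σ.map g ≫ k = h)) := by
  have := hasBinaryBiproducts_of_finite_biproducts C
  refine ⟨fun X hX Y hY h => ?_, fun X => ?_⟩
  · obtain ⟨l, rfl⟩ := (Quotient.functor _).map_surjective h
    exact (map_eq_map_zero_iff l).2 (P.hom_triv hX hY l)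
  · obtain ⟨A, B, f, g, hA, hB, hk, hc⟩ := P.exists_seq X
    exact ⟨A, B, f, g, hA, hB, IsZKernel.map_comp_map hk,
      fun _ => IsZKernel.existsUnique_quotient_lift hk,
      fun _ => IsZCokernel.existsUnique_quotient_desc hc⟩

theorem stmt12 [Preadditive C] [HasZeroObject C] [HasFiniteBiproducts C]
    (P : PretorsionTheory C) :
    letI σ := Quotient.functor (trivRel (P.T ∩ P.F))
    (∀ X ∈ P.T, ∀ Y ∈ P.F, ∀ h : σ.obj X ⟶ σ.obj Y, h = σ.map (0 : X ⟶ Y)) ∧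
    (∀ X : C, ∃ (A B : C) (f : A ⟶ X) (g : X ⟶ B), A ∈ P.T ∧ B ∈ P.F ∧
      σ.map f ≫ σ.map g = σ.map (0 : A ⟶ B) ∧
      (∀ (W : C) (h : σ.obj W ⟶ σ.obj X), h ≫ σ.map g = σ.map (0 : W ⟶ B) →
        ∃! k : σ.obj W ⟶ σ.obj A, k ≫ σ.map f = h) ∧
      (∀ (W : C) (h : σ.obj X ⟶ σ.obj W), σ.map f ≫ h = σ.map (0 : A ⟶ W) →
        ∃! k : σ.obj B ⟶ σ.obj W, σ.map g ≫ k = h)) :=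
  stmt12_general P
end
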